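/- Let G be a nonelementary finite simple graph of order n with γ_R(G) = 4. Then G is v-critical if and only if for every vertex x ∈ V(G) there exists a vertex a_x not adjacent to x (and a_x ≠ x) with deg(a_x) = n − 3. -/

import Mathlib

/-!
For every vertex `a`, the function that is `2` on `a`, `1` on the non-neighbours of `a` and `0`
on its neighbours is Roman, so `γ_R(G) ≤ n + 1 - deg a`. Conversely, a Roman function of weight
`3` on more than `3` vertices is `2` on some vertex `a` and nonzero on at most one other vertex,
so `a` is adjacent to all but at most one other vertex: `deg a ≥ n - 2`. Deleting a vertex lowers
`γ_R` by at most one.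

If `γ_R(G - x) = 3`, then `G - x` has a vertex `a` of degree at least `n - 3`, while
`γ_R(G) = 4` forces `deg_G a ≤ n - 3`; hence `a` is not adjacent to `x` and has degree exactly
`n - 3`. Conversely, such an `a` keeps its degree `n - 3` in the `(n - 1)`-vertex graph `G - x`,
whence `γ_R(G - x) ≤ 3`.
-/

open SimpleGraph

/-- A Roman domination function on `G`. -/
def IsRomanFn {V : Type*} (G : SimpleGraph V) (r : V → Fin 3) : Prop :=
  ∀ u, r u = 0 → ∃ v, G.Adj u v ∧ r v = 2

/-- The weight of a Roman domination function. -/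
noncomputable def romanWeight {V : Type*} [Fintype V] (r : V → Fin 3) : ℕ :=
  ∑ u, (r u : ℕ)

/-- The Roman domination number of `G`. -/
noncomputable def romanNumber {V : Type*} [Fintype V] (G : SimpleGraph V) : ℕ :=
  sInf {w | ∃ r : V → Fin 3, IsRomanFn G r ∧ romanWeight r = w}

/-- `G` is vertex critical. -/
def VCritical {V : Type*} [Fintype V] [DecidableEq V] (G : SimpleGraph V) : Prop :=
  ∀ v : V, romanNumber (G.induce {u | u ≠ v}) = romanNumber G - 1

/-- `G` is edge critical. -/
def ECritical {V : Type*} [Fintype V] [DecidableEq V] (G : SimpleGraph V) : Prop :=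
  VCritical G ∧ ∀ e ∈ G.edgeSet, ¬ VCritical (G.deleteEdges {e})

/-- `G` is Roman saturated. -/
def RomanSaturated {V : Type*} [Fintype V] (G : SimpleGraph V) : Prop :=
  ∀ v w : V, v ≠ w → ¬ G.Adj v w →
    romanNumber (G ⊔ SimpleGraph.fromEdgeSet {s(v, w)}) = romanNumber G - 1

/-- `v` is a cut vertex of `G`. -/
def IsCutVertex {V : Type*} [Fintype V] [DecidableEq V] (G : SimpleGraph V) (v : V) : Prop :=
  Nat.card G.ConnectedComponent < Nat.card (G.induce {u | u ≠ v}).ConnectedComponent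

namespace SimpleGraph

theorem ncard_neighborSet_induce_ne {V : Type*} (G : SimpleGraph V) {a x : V} (hax : a ≠ x) :
    ((G.induce {u | u ≠ x}).neighborSet ⟨a, hax⟩).ncard = (G.neighborSet a \ {x}).ncard := by
  rw [neighborSet_induce, ← Set.ncard_image_of_injective _ Subtype.val_injective,
    Set.image_preimage_eq_inter_range, Subtype.range_coe, Set.sdiff_eq]
  rfl

theorem card_le_ncard_neighborSet_add_card {V : Type*} [Fintype V] {G : SimpleGraph V} {a : V}
    (s : Finset V) (h : ∀ u ∉ s, G.Adj a u) :
    Fintype.card V ≤ (G.neighborSet a).ncard + s.card := by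
  classical
  have hsub : ((Finset.univ \ s : Finset V) : Set V) ⊆ G.neighborSet a := by
    intro u hu
    simpa using h u (by simpa using hu)
  have := Set.ncard_le_ncard hsub
  rw [Set.ncard_coe_finset, Finset.card_sdiff_of_subset (Finset.subset_univ s),
    Finset.card_univ] at this
  omega

end SimpleGraph

section RomanDomination

variable {V : Type*} [Fintype V] {G : SimpleGraph V} {r : V → Fin 3}

theorem exists_romanWeight_eq_romanNumber (G : SimpleGraph V) :
    ∃ r : V → Fin 3, IsRomanFn G r ∧ romanWeight r = romanNumber G :=
  Nat.sInf_mem (s := {w | ∃ r : V → Fin 3, IsRomanFn G r ∧ romanWeight r = w})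
    ⟨_, fun _ => 2, fun u hu => by simp at hu, rfl⟩

theorem romanNumber_le_romanWeight (hr : IsRomanFn G r) : romanNumber G ≤ romanWeight r :=
  Nat.sInf_le ⟨r, hr, rfl⟩

theorem romanNumber_add_ncard_neighborSet_le (G : SimpleGraph V) (a : V) :
    romanNumber G + (G.neighborSet a).ncard ≤ Fintype.card V + 1 := by
  classical
  let r : V → Fin 3 := fun u => if u = a then 2 else if G.Adj a u then 0 else 1
  have hr : IsRomanFn G r := by
    intro u hu
    refine ⟨a, ?_, by simp [r]⟩
    by_cases hua : u = a <;> by_cases hau : G.Adj a u <;> simp_all [r, G.adj_comm]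
  have hdeg : (G.neighborSet a).ncard = ∑ u, if G.Adj a u then 1 else 0 := by
    rw [Finset.sum_boole, Nat.cast_id, ← Set.ncard_coe_finset]
    congr 1
    ext u
    simp
  have hpoint : ∀ u, (r u : ℕ) + (if G.Adj a u then 1 else 0) = 1 + if u = a then 1 else 0 := by
    intro u
    by_cases hua : u = a <;> by_cases hau : G.Adj a u <;> simp_all [r]
  have hweight : romanWeight r + (G.neighborSet a).ncard = Fintype.card V + 1 := by
    rw [romanWeight, hdeg, ← Finset.sum_add_distrib, Finset.sum_congr rfl fun u _ => hpoint u,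
      Finset.sum_add_distrib]
    simp
  have := romanNumber_le_romanWeight hr
  omega

theorem romanNumber_le_romanNumber_induce_ne_add_one [DecidableEq V] (G : SimpleGraph V) (x : V) :
    romanNumber G ≤ romanNumber (G.induce {u | u ≠ x}) + 1 := by
  obtain ⟨r, hr, hw⟩ := exists_romanWeight_eq_romanNumber (G.induce {u | u ≠ x})
  let r' : V → Fin 3 := fun u => if h : u = x then 1 else r ⟨u, h⟩
  have hr' : IsRomanFn G r' := by
    intro u hu
    have hux : u ≠ x := by rintro rfl; simp [r'] at hu
    obtain ⟨v, huv, hv⟩ := hr ⟨u, hux⟩ (by simpa [r', hux] using hu)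
    exact ⟨v, huv, by simpa [r', v.2.out] using hv⟩
  have hw' : romanWeight r' = romanWeight r + 1 := by
    rw [romanWeight, Fintype.sum_eq_add_sum_subtype_ne _ x, add_comm]
    simp only [r', romanWeight, dif_pos]
    congr 1
    exact Fintype.sum_equiv (Equiv.refl _) _ _ fun u => by simp [u.2]
  rw [← hw]
  exact (romanNumber_le_romanWeight hr').trans hw'.le

theorem IsRomanFn.exists_eq_two (hr : IsRomanFn G r) (hw : romanWeight r < Fintype.card V) :
    ∃ a, r a = 2 := by
  by_contra! h
  have hpos : ∀ u, 1 ≤ (r u : ℕ) := by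
    intro u
    have hu : r u ≠ 0 := fun hu => by
      obtain ⟨v, -, hv⟩ := hr u hu
      exact h v hv
    exact Nat.one_le_iff_ne_zero.2 (Fin.val_ne_zero_iff.2 hu)
  have : Fintype.card V ≤ romanWeight r := by
    simpa [romanWeight] using Finset.sum_le_sum fun u (_ : u ∈ Finset.univ) => hpos u
  omega

theorem IsRomanFn.exists_forall_adj [DecidableEq V] (hr : IsRomanFn G r)
    (hw : romanWeight r ≤ 3) {a : V} (ha : r a = 2) :
    ∃ b, ∀ u, u ≠ a → u ≠ b → G.Adj a u := by
  have hrest : ∑ u ∈ Finset.univ.erase a, (r u : ℕ) ≤ 1 := by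
    have := Finset.add_sum_erase Finset.univ (fun u => (r u : ℕ)) (Finset.mem_univ a)
    rw [ha] at this
    simp only [romanWeight] at hw
    omega
  have hle : ∀ u ≠ a, (r u : ℕ) ≤ 1 := fun u hu =>
    (Finset.single_le_sum (f := fun u => (r u : ℕ)) (fun _ _ => Nat.zero_le _)
      (Finset.mem_erase.2 ⟨hu, Finset.mem_univ u⟩)).trans hrest
  obtain ⟨b, hb⟩ : ∃ b, ∀ u, u ≠ a → u ≠ b → r u = 0 := by
    by_cases h : ∃ b ≠ a, r b ≠ 0
    · obtain ⟨b, hba, hb⟩ := h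
      refine ⟨b, fun u hua hub => Fin.val_eq_zero_iff.1 ?_⟩
      have := (Finset.add_le_sum (f := fun u => (r u : ℕ)) (fun _ _ => Nat.zero_le _)
        (Finset.mem_erase.2 ⟨hua, Finset.mem_univ u⟩) (Finset.mem_erase.2 ⟨hba, Finset.mem_univ b⟩)
        hub).trans hrest
      have := Fin.val_ne_zero_iff.2 hb
      omega
    · push Not at h
      exact ⟨a, fun u hua _ => h u hua⟩
  refine ⟨b, fun u hua hub => ?_⟩
  obtain ⟨v, huv, hv⟩ := hr u (hb u hua hub)
  obtain rfl : v = a := by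
    by_contra hva
    simpa [hv] using hle v hva
  exact huv.symm

theorem exists_card_le_ncard_neighborSet_add_two (h : romanNumber G ≤ 3)
    (hcard : 3 < Fintype.card V) : ∃ a, Fintype.card V ≤ (G.neighborSet a).ncard + 2 := by
  classical
  obtain ⟨r, hr, hw⟩ := exists_romanWeight_eq_romanNumber G
  obtain ⟨a, ha⟩ := hr.exists_eq_two (by omega)
  obtain ⟨b, hb⟩ := hr.exists_forall_adj (by omega) ha
  have hab : ∀ u ∉ ({a, b} : Finset V), G.Adj a u := fun u hu => by
    simp only [Finset.mem_insert, Finset.mem_singleton, not_or] at hu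
    exact hb u hu.1 hu.2
  exact ⟨a, (card_le_ncard_neighborSet_add_card _ hab).trans (by grw [Finset.card_le_two])⟩

end RomanDomination

/-- a nonelementary graph `G` of order `n` with γ_R(G) = 4 is v-critical iff
every vertex `x` has a nonadjacent vertex `a_x ≠ x` of degree `n - 3`. -/
theorem vCritical_iff_nonadjacent_degree {V : Type*} [Fintype V] [DecidableEq V]
    (G : SimpleGraph V) (hne : romanNumber G < Fintype.card V) (h4 : romanNumber G = 4) :
    VCritical G ↔ ∀ x : V, ∃ a : V, a ≠ x ∧ ¬ G.Adj x a ∧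
      (G.neighborSet a).ncard = Fintype.card V - 3 := by
  have hcard : ∀ x : V, Fintype.card {u | u ≠ x} = Fintype.card V - 1 := fun x => Set.card_ne_eq x
  constructor
  · intro hcrit x
    obtain ⟨⟨a, hax⟩, ha⟩ := exists_card_le_ncard_neighborSet_add_two (G := G.induce {u | u ≠ x})
      (by rw [hcrit x, h4]) (by rw [hcard x]; omega)
    have hup := romanNumber_add_ncard_neighborSet_le G a
    rw [hcard x, ncard_neighborSet_induce_ne G hax] at ha
    have hsub := Set.ncard_sdiff_singleton_le (G.neighborSet a) x
    refine ⟨a, hax, fun hxa => ?_, by omega⟩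
    have := Set.ncard_sdiff_singleton_lt_of_mem (G.mem_neighborSet a x |>.2 hxa.symm)
    omega
  · intro hdeg x
    obtain ⟨a, hax, hxa, ha⟩ := hdeg x
    have hup := romanNumber_add_ncard_neighborSet_le (G.induce {u | u ≠ x}) ⟨a, hax⟩
    rw [ncard_neighborSet_induce_ne G hax, Set.sdiff_singleton_eq_self (fun h => hxa h.symm),
      hcard x] at hup
    have hlow := romanNumber_le_romanNumber_induce_ne_add_one G x
    omega
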